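/- Let V: H → H' be an isometry, {M_a}_{a∈{0,1}ⁿ} a projective measurement on H, |ψ⟩ ∈ H a unit state with p(a) = ⟨ψ|M_a|ψ⟩, and {M'_a} a projective measurement on H' with state |ψ'⟩ such that M'_a|ψ'⟩ ≠ 0 for all a. If for all s ∈ {0,1}ⁿ the observables M^s = Σ_a (−1)^{a·s} M_a and M'^s = Σ_a (−1)^{a·s} M'_a satisfy ‖V M^s|ψ⟩ − M'^s|ψ'⟩‖ ≤ δ, then, defining the random variable D(a) = (1/2)‖ V M_a|ψ⟩⟨ψ|M_a V† / p(a) − M'_a|ψ'⟩⟨ψ'|M'_a / ⟨ψ'|M'_a|ψ'⟩ ‖₁ on outcomes a with p(a) > 0, one has Pr_{a∼p}(D ≤ δ^{2/3}) ≥ 1 − 4δ^{2/3}. -/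

import Mathlib

open scoped ComplexOrder InnerProductSpace
open Classical

/-- The trace norm (Schatten 1-norm) of a square complex matrix:
`‖A‖₁ = tr √(AᴴA)`. -/
noncomputable def traceNorm {d : ℕ} (A : Matrix (Fin d) (Fin d) ℂ) : ℝ :=
  (((Matrix.posSemidef_conjTranspose_mul_self A).1.eigenvectorUnitary : Matrix (Fin d) (Fin d) ℂ) *
    Matrix.diagonal (((↑) : ℝ → ℂ) ∘ (Real.sqrt ∘ (Matrix.posSemidef_conjTranspose_mul_self A).1.eigenvalues)) *
    (star (Matrix.posSemidef_conjTranspose_mul_self A).1.eigenvectorUnitary :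
      Matrix (Fin d) (Fin d) ℂ)).trace.re

/-- The rank-one operator `|u⟩⟨u|` associated to a vector `u`. -/
noncomputable def outer {d : ℕ} (u : EuclideanSpace ℂ (Fin d)) :
    Matrix (Fin d) (Fin d) ℂ :=
  Matrix.of fun i j => u i * (starRingEnd ℂ) (u j)

/-- The number of positions at which both bit strings are `1`. -/
def dotCount {n : ℕ} (a s : Fin n → Bool) : ℕ :=
  ∑ j, if a j && s j then 1 else 0

/-- The observable `M^s = Σ_a (−1)^{a·s} M_a`. -/
noncomputable def obsOf {n d : ℕ} (M : (Fin n → Bool) → Matrix (Fin d) (Fin d) ℂ)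
    (s : Fin n → Bool) : Matrix (Fin d) (Fin d) ℂ :=
  ∑ a, ((-1 : ℂ) ^ dotCount a s) • M a

/-- The outcome probability `p(a) = ⟨ψ|M_a|ψ⟩`. -/
noncomputable def outcomeProb {n d : ℕ} (M : (Fin n → Bool) → Matrix (Fin d) (Fin d) ℂ)
    (ψ : EuclideanSpace ℂ (Fin d)) (a : Fin n → Bool) : ℝ :=
  (⟪ψ, Matrix.toEuclideanLin (M a) ψ⟫_ℂ).re

/-- The random variable `D(a)`: one half the trace distance between the (normalized)
physical and reference post-measurement states for outcome `a` (and `0` when `p(a) = 0`). -/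
noncomputable def postMeasTraceDist {n d d' : ℕ}
    (V : Matrix (Fin d') (Fin d) ℂ)
    (M : (Fin n → Bool) → Matrix (Fin d) (Fin d) ℂ) (ψ : EuclideanSpace ℂ (Fin d))
    (M' : (Fin n → Bool) → Matrix (Fin d') (Fin d') ℂ) (ψ' : EuclideanSpace ℂ (Fin d'))
    (a : Fin n → Bool) : ℝ :=
  if 0 < outcomeProb M ψ a then
    (1 / 2) * traceNorm
      (((outcomeProb M ψ a : ℂ))⁻¹ • outer (Matrix.toEuclideanLin (V * M a) ψ) -
        ((outcomeProb M' ψ' a : ℂ))⁻¹ • outer (Matrix.toEuclideanLin (M' a) ψ'))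
  else 0

/-!
Write `u a = V M_a ψ` and `v a = M'_a ψ'`. The vectors `V M^s ψ` and `M'^s ψ'` are the
Walsh–Hadamard transforms of the families `u` and `v`, so by Parseval the hypothesis gives
`∑ a, ‖u a - v a‖² ≤ δ²`. Since `p(a) = ‖u a‖²`, the post-measurement states are the pure states of
the normalised vectors `û`, `v̂`. Their difference has rank at most two, which bounds its trace norm
by `2 ‖û - v̂‖`, and `‖û - v̂‖ ≤ 2 ‖u - v‖ / ‖u‖`. Hence `p(a) D(a)² ≤ 4 ‖u a - v a‖²`, so
`E[D²] ≤ 4 δ²`, and Chebyshev's inequality at the threshold `δ^{2/3}` concludes.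
-/

open Matrix

namespace Matrix.IsHermitian

variable {𝕜 : Type*} [RCLike 𝕜] {ι : Type*} [Fintype ι] [DecidableEq ι]
  {A : Matrix ι ι 𝕜}

lemma trace_cfc (hA : A.IsHermitian) (f : ℝ → ℝ) :
    (cfc f A).trace = ∑ i, (f (hA.eigenvalues i) : 𝕜) := by
  rw [hA.cfc_eq, IsHermitian.cfc, Unitary.conjStarAlgAut_apply, trace_mul_cycle,
    Unitary.coe_star_mul_self, one_mul, trace_diagonal]
  rfl

lemma re_trace_mul_self (hA : A.IsHermitian) :
    RCLike.re (A * A).trace = ∑ i, hA.eigenvalues i ^ 2 := by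
  rw [← sq, ← cfc_pow_id (R := ℝ) A 2 hA.isSelfAdjoint, hA.trace_cfc, map_sum]
  simp only [RCLike.ofReal_re]

end Matrix.IsHermitian

lemma traceNorm_eq_re_trace_cfc_sqrt {d : ℕ} (A : Matrix (Fin d) (Fin d) ℂ) :
    traceNorm A = (cfc Real.sqrt (Aᴴ * A)).trace.re := by
  rw [(posSemidef_conjTranspose_mul_self A).1.cfc_eq]
  rfl

lemma traceNorm_nonneg {d : ℕ} (A : Matrix (Fin d) (Fin d) ℂ) : 0 ≤ traceNorm A := by
  rw [traceNorm_eq_re_trace_cfc_sqrt, (isHermitian_conjTranspose_mul_self A).trace_cfc,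
    Complex.re_sum]
  exact Finset.sum_nonneg fun i _ => by simp [Real.sqrt_nonneg]

lemma Matrix.IsHermitian.traceNorm_eq_sum_abs_eigenvalues {d : ℕ}
    {A : Matrix (Fin d) (Fin d) ℂ} (hA : A.IsHermitian) :
    traceNorm A = ∑ i, |hA.eigenvalues i| := by
  have hsqrt : cfc Real.sqrt (Aᴴ * A) = cfc (fun x : ℝ => |x|) A := by
    rw [hA.eq, ← sq, ← cfc_comp_pow Real.sqrt 2 A]
    congr 1
    exact funext Real.sqrt_sq_eq_abs
  rw [traceNorm_eq_re_trace_cfc_sqrt, hsqrt, hA.trace_cfc, Complex.re_sum]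
  simp

lemma Matrix.rank_add_le {R m n : Type*} [Field R] [Fintype n] (A B : Matrix m n R) :
    (A + B).rank ≤ A.rank + B.rank := by
  rw [Matrix.rank, Matrix.rank, Matrix.rank, Matrix.mulVecLin_add]
  have h1 : LinearMap.range (A.mulVecLin + B.mulVecLin) ≤
      LinearMap.range A.mulVecLin ⊔ LinearMap.range B.mulVecLin := by
    rintro x ⟨y, rfl⟩
    exact Submodule.mem_sup.mpr ⟨A.mulVecLin y, ⟨y, rfl⟩, B.mulVecLin y, ⟨y, rfl⟩, rfl⟩
  exact (Submodule.finrank_mono h1).trans (Submodule.finrank_add_le_finrank_add_finrank _ _)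

lemma Matrix.IsHermitian.traceNorm_sq_le_rank_mul {d : ℕ}
    {A : Matrix (Fin d) (Fin d) ℂ} (hA : A.IsHermitian) :
    traceNorm A ^ 2 ≤ A.rank * (A * A).trace.re := by
  set s := Finset.univ.filter fun i => hA.eigenvalues i ≠ 0
  have hcard : s.card = A.rank := by
    rw [hA.rank_eq_card_non_zero_eigs, Fintype.card_subtype]
  have hsupp : ∀ f : ℝ → ℝ, f 0 = 0 → ∑ i, f (hA.eigenvalues i) = ∑ i ∈ s, f (hA.eigenvalues i) :=
    fun f hf => (Finset.sum_filter_of_ne (p := fun i => hA.eigenvalues i ≠ 0)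
      fun i _ hfi h0 => hfi (by rw [h0, hf])).symm
  rw [hA.traceNorm_eq_sum_abs_eigenvalues, hsupp _ abs_zero, ← RCLike.re_eq_complex_re,
    hA.re_trace_mul_self, hsupp (· ^ 2) (zero_pow two_ne_zero), ← hcard]
  simpa only [sq_abs] using sq_sum_le_card_mul_sum_sq (s := s) (f := fun i => |hA.eigenvalues i|)

section Outer

variable {d : ℕ}

lemma outer_eq_vecMulVec (u : EuclideanSpace ℂ (Fin d)) : outer u = vecMulVec u (star u) := by
  ext i j
  simp [outer, vecMulVec_apply]

lemma outer_isHermitian (u : EuclideanSpace ℂ (Fin d)) : (outer u).IsHermitian := by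
  ext i j
  simp [outer, mul_comm]

lemma outer_real_smul (r : ℝ) (u : EuclideanSpace ℂ (Fin d)) :
    outer (r • u) = ((r ^ 2 : ℝ) : ℂ) • outer u := by
  ext i j
  simp [outer, Complex.real_smul, Complex.conj_ofReal]
  ring

lemma rank_outer_sub_outer_le (u v : EuclideanSpace ℂ (Fin d)) :
    (outer u - outer v).rank ≤ 2 := by
  have hsplit : outer u - outer v = vecMulVec u (star u) + vecMulVec (-v) (star v) := by
    rw [outer_eq_vecMulVec, outer_eq_vecMulVec, sub_eq_add_neg, ← neg_vecMulVec]
    rfl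
  rw [hsplit]
  exact (rank_add_le _ _).trans (add_le_add (rank_vecMulVec_le _ _) (rank_vecMulVec_le _ _))

lemma trace_outer_mul_outer (x y : EuclideanSpace ℂ (Fin d)) :
    (outer x * outer y).trace = ⟪x, y⟫_ℂ * ⟪y, x⟫_ℂ := by
  simp only [trace, diag, mul_apply, outer, of_apply, PiLp.inner_apply, RCLike.inner_apply,
    Finset.sum_mul_sum]
  rw [Finset.sum_comm]
  refine Finset.sum_congr rfl fun i _ => Finset.sum_congr rfl fun k _ => ?_
  ring

lemma re_trace_sq_outer_sub_outer {x y : EuclideanSpace ℂ (Fin d)} (hx : ‖x‖ = 1)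
    (hy : ‖y‖ = 1) :
    ((outer x - outer y) * (outer x - outer y)).trace.re = 2 - 2 * ‖⟪x, y⟫_ℂ‖ ^ 2 := by
  have hexp : (outer x - outer y) * (outer x - outer y) =
      outer x * outer x - outer x * outer y - outer y * outer x + outer y * outer y := by
    noncomm_ring
  have hxy : ⟪x, y⟫_ℂ * ⟪y, x⟫_ℂ = ((‖⟪x, y⟫_ℂ‖ ^ 2 : ℝ) : ℂ) := by
    rw [← inner_conj_symm y x, Complex.mul_conj', Complex.ofReal_pow]
  rw [hexp]
  simp only [trace_add, trace_sub, trace_outer_mul_outer, inner_self_eq_norm_sq_to_K, hx, hy,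
    mul_comm ⟪y, x⟫_ℂ, hxy, RCLike.ofReal_one, one_pow, mul_one, Complex.add_re, Complex.sub_re,
    Complex.one_re, Complex.ofReal_re]
  ring

lemma traceNorm_outer_sub_outer_le {x y : EuclideanSpace ℂ (Fin d)} (hx : ‖x‖ = 1)
    (hy : ‖y‖ = 1) : traceNorm (outer x - outer y) ≤ 2 * ‖x - y‖ := by
  have hX : (outer x - outer y).IsHermitian := (outer_isHermitian x).sub (outer_isHermitian y)
  have hrank : ((outer x - outer y).rank : ℝ) ≤ 2 := by exact_mod_cast rank_outer_sub_outer_le x y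
  have hsq := hX.traceNorm_sq_le_rank_mul
  rw [re_trace_sq_outer_sub_outer hx hy] at hsq
  set r := ‖⟪x, y⟫_ℂ‖
  have hr : r ≤ 1 := by simpa [hx, hy] using norm_inner_le_norm (𝕜 := ℂ) x y
  have hdist : ‖x - y‖ ^ 2 = 2 - 2 * RCLike.re ⟪x, y⟫_ℂ := by
    rw [norm_sub_sq (𝕜 := ℂ), hx, hy]
    ring
  have hsq_le : traceNorm (outer x - outer y) ^ 2 ≤ (2 * ‖x - y‖) ^ 2 :=
    calc traceNorm (outer x - outer y) ^ 2
        ≤ (outer x - outer y).rank * (2 - 2 * r ^ 2) := hsq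
      _ ≤ 2 * (2 - 2 * r ^ 2) := by gcongr; nlinarith [norm_nonneg ⟪x, y⟫_ℂ]
      _ ≤ 4 * (2 - 2 * r) := by nlinarith [sq_nonneg (1 - r)]
      _ ≤ (2 * ‖x - y‖) ^ 2 := by
        rw [mul_pow, hdist]
        linarith [RCLike.re_le_norm ⟪x, y⟫_ℂ]
  exact le_of_sq_le_sq hsq_le (by positivity)

end Outer

lemma norm_normalize_sub_normalize_le {E : Type*} [NormedAddCommGroup E] [NormedSpace ℝ E]
    {u : E} (hu : u ≠ 0) (v : E) :
    ‖NormedSpace.normalize u - NormedSpace.normalize v‖ ≤ 2 * ‖u - v‖ / ‖u‖ := by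
  have hu' : 0 < ‖u‖ := norm_pos_iff.mpr hu
  have hsplit : NormedSpace.normalize u - NormedSpace.normalize v =
      ‖u‖⁻¹ • (u - v) + (‖u‖⁻¹ - ‖v‖⁻¹) • v := by
    simp only [NormedSpace.normalize, smul_sub, sub_smul]
    abel
  have hscale : |‖u‖⁻¹ - ‖v‖⁻¹| * ‖v‖ ≤ ‖u - v‖ / ‖u‖ := by
    rcases eq_or_ne v 0 with rfl | hv
    · simp only [norm_zero, mul_zero]
      positivity
    have hv' : 0 < ‖v‖ := norm_pos_iff.mpr hv
    calc |‖u‖⁻¹ - ‖v‖⁻¹| * ‖v‖ = |‖v‖ - ‖u‖| / ‖u‖ := by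
          rw [inv_sub_inv hu'.ne' hv'.ne', abs_div, abs_of_pos (mul_pos hu' hv')]
          field_simp
      _ ≤ ‖u - v‖ / ‖u‖ := by
          gcongr
          rw [abs_sub_comm]
          exact abs_norm_sub_norm_le u v
  calc ‖NormedSpace.normalize u - NormedSpace.normalize v‖
      ≤ ‖u‖⁻¹ * ‖u - v‖ + |‖u‖⁻¹ - ‖v‖⁻¹| * ‖v‖ := by
        rw [hsplit]
        refine (norm_add_le _ _).trans_eq ?_
        rw [norm_smul, norm_smul, Real.norm_of_nonneg (by positivity), Real.norm_eq_abs]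
    _ ≤ ‖u - v‖ / ‖u‖ + ‖u - v‖ / ‖u‖ := by
        rw [inv_mul_eq_div]
        gcongr
    _ = 2 * ‖u - v‖ / ‖u‖ := by ring

lemma outer_normalize {d : ℕ} (u : EuclideanSpace ℂ (Fin d)) :
    outer (NormedSpace.normalize u) = ((‖u‖ ^ 2 : ℝ) : ℂ)⁻¹ • outer u := by
  rw [NormedSpace.normalize, outer_real_smul, inv_pow, Complex.ofReal_inv]

lemma traceNorm_smul_outer_sub_smul_outer_le {d : ℕ} {u v : EuclideanSpace ℂ (Fin d)} (hu : u ≠ 0)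
    (hv : v ≠ 0) :
    traceNorm (((‖u‖ ^ 2 : ℝ) : ℂ)⁻¹ • outer u - ((‖v‖ ^ 2 : ℝ) : ℂ)⁻¹ • outer v) ≤
      4 * ‖u - v‖ / ‖u‖ := by
  rw [← outer_normalize, ← outer_normalize]
  calc _ ≤ 2 * ‖NormedSpace.normalize u - NormedSpace.normalize v‖ :=
        traceNorm_outer_sub_outer_le (NormedSpace.norm_normalize_eq_one_iff.mpr hu)
          (NormedSpace.norm_normalize_eq_one_iff.mpr hv)
    _ ≤ 2 * (2 * ‖u - v‖ / ‖u‖) := by gcongr; exact norm_normalize_sub_normalize_le hu v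
    _ = 4 * ‖u - v‖ / ‖u‖ := by ring

lemma neg_one_pow_dotCount_mul_neg_one_pow_dotCount {n : ℕ} (a b s : Fin n → Bool) :
    (-1 : ℂ) ^ dotCount a s * (-1) ^ dotCount b s =
      ∏ j, (-1 : ℂ) ^ ((if a j && s j then 1 else 0) + (if b j && s j then 1 else 0)) := by
  rw [← pow_add, dotCount, dotCount, ← Finset.sum_add_distrib, Finset.prod_pow_eq_pow_sum]

lemma sum_neg_one_pow_dotCount_mul {n : ℕ} (a b : Fin n → Bool) :
    ∑ s, (-1 : ℂ) ^ dotCount a s * (-1) ^ dotCount b s = if a = b then 2 ^ n else 0 := by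
  simp_rw [neg_one_pow_dotCount_mul_neg_one_pow_dotCount]
  rw [← Fintype.prod_sum fun j c =>
    (-1 : ℂ) ^ ((if a j && c then 1 else 0) + (if b j && c then 1 else 0))]
  have hfactor : ∀ j, ∑ c : Bool,
      (-1 : ℂ) ^ ((if a j && c then 1 else 0) + (if b j && c then 1 else 0)) =
        if a j = b j then 2 else 0 := by
    intro j
    cases a j <;> cases b j <;> norm_num
  simp_rw [hfactor]
  split_ifs with hab
  · simp [hab]
  · obtain ⟨j, hj⟩ := Function.ne_iff.mp hab
    exact Finset.prod_eq_zero (Finset.mem_univ j) (if_neg hj)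

lemma sum_norm_sq_sum_neg_one_pow_dotCount_smul {n : ℕ} {E : Type*} [NormedAddCommGroup E]
    [InnerProductSpace ℂ E] (w : (Fin n → Bool) → E) :
    ∑ s, ‖∑ a, (-1 : ℂ) ^ dotCount a s • w a‖ ^ 2 = 2 ^ n * ∑ a, ‖w a‖ ^ 2 := by
  have hinner : ∑ s, ⟪∑ a, (-1 : ℂ) ^ dotCount a s • w a, ∑ b, (-1 : ℂ) ^ dotCount b s • w b⟫_ℂ =
      (2 : ℂ) ^ n * ∑ a, ⟪w a, w a⟫_ℂ := by
    simp_rw [sum_inner, inner_sum, inner_smul_left, inner_smul_right, map_pow, map_neg, map_one,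
      ← mul_assoc]
    rw [Finset.sum_comm, Finset.mul_sum]
    refine Finset.sum_congr rfl fun a _ => ?_
    rw [Finset.sum_comm]
    simp_rw [← Finset.sum_mul, sum_neg_one_pow_dotCount_mul, ite_mul, zero_mul,
      Finset.sum_ite_eq, if_pos (Finset.mem_univ a)]
  have hre (x : E) : (⟪x, x⟫_ℂ).re = ‖x‖ ^ 2 := inner_self_eq_norm_sq (𝕜 := ℂ) x
  have := congrArg Complex.re hinner
  rw [Complex.re_sum, ← Complex.ofReal_ofNat, ← Complex.ofReal_pow, Complex.re_ofReal_mul,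
    Complex.re_sum] at this
  simpa only [hre] using this

lemma sum_norm_sq_le_of_forall_norm_sum_neg_one_pow_dotCount_smul_le {n : ℕ} {E : Type*}
    [NormedAddCommGroup E] [InnerProductSpace ℂ E] (w : (Fin n → Bool) → E) {δ : ℝ}
    (h : ∀ s, ‖∑ a, (-1 : ℂ) ^ dotCount a s • w a‖ ≤ δ) :
    ∑ a, ‖w a‖ ^ 2 ≤ δ ^ 2 := by
  have hδ : 0 ≤ δ := (norm_nonneg _).trans (h fun _ => false)
  have hsum : (2 : ℝ) ^ n * ∑ a, ‖w a‖ ^ 2 ≤ 2 ^ n * δ ^ 2 :=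
    calc (2 : ℝ) ^ n * ∑ a, ‖w a‖ ^ 2
        = ∑ s, ‖∑ a, (-1 : ℂ) ^ dotCount a s • w a‖ ^ 2 :=
          (sum_norm_sq_sum_neg_one_pow_dotCount_smul w).symm
      _ ≤ ∑ _s : Fin n → Bool, δ ^ 2 := by gcongr with s; exact h s
      _ = 2 ^ n * δ ^ 2 := by simp
  exact le_of_mul_le_mul_left hsum (by positivity)

section Measurement

variable {n d d' : ℕ}

lemma toEuclideanLin_obsOf_apply (M : (Fin n → Bool) → Matrix (Fin d) (Fin d) ℂ)
    (s : Fin n → Bool) (x : EuclideanSpace ℂ (Fin d)) :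
    toEuclideanLin (obsOf M s) x = ∑ a, (-1 : ℂ) ^ dotCount a s • toEuclideanLin (M a) x := by
  simp [obsOf]

lemma toEuclideanLin_mul_obsOf_apply (A : Matrix (Fin d') (Fin d) ℂ)
    (M : (Fin n → Bool) → Matrix (Fin d) (Fin d) ℂ) (s : Fin n → Bool)
    (x : EuclideanSpace ℂ (Fin d)) :
    toEuclideanLin (A * obsOf M s) x =
      ∑ a, (-1 : ℂ) ^ dotCount a s • toEuclideanLin (A * M a) x := by
  simp [toEuclideanLin_obsOf_apply]

lemma norm_toEuclideanLin_of_conjTranspose_mul_self {V : Matrix (Fin d') (Fin d) ℂ}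
    (hV : Vᴴ * V = 1) (x : EuclideanSpace ℂ (Fin d)) : ‖toEuclideanLin V x‖ = ‖x‖ := by
  have hsq : ‖toEuclideanLin V x‖ ^ 2 = ‖x‖ ^ 2 := by
    rw [← inner_self_eq_norm_sq (𝕜 := ℂ), ← inner_self_eq_norm_sq (𝕜 := ℂ) x,
      ← LinearMap.adjoint_inner_right (toEuclideanLin V),
      ← toEuclideanLin_conjTranspose_eq_adjoint, ← LinearMap.comp_apply, ← toLpLin_mul_same, hV,
      toLpLin_one, LinearMap.id_apply]
  exact (sq_eq_sq₀ (norm_nonneg _) (norm_nonneg _)).mp hsq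

lemma outcomeProb_eq_norm_sq {M : (Fin n → Bool) → Matrix (Fin d) (Fin d) ℂ} {a : Fin n → Bool}
    (hherm : (M a).IsHermitian) (hproj : M a * M a = M a) (ψ : EuclideanSpace ℂ (Fin d)) :
    outcomeProb M ψ a = ‖toEuclideanLin (M a) ψ‖ ^ 2 := by
  conv_lhs => rw [outcomeProb, ← hproj, toLpLin_mul_same, LinearMap.comp_apply,
    ← LinearMap.adjoint_inner_left (toEuclideanLin (M a)),
    ← toEuclideanLin_conjTranspose_eq_adjoint, hherm.eq]
  exact inner_self_eq_norm_sq (𝕜 := ℂ) _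

lemma sum_outcomeProb {M : (Fin n → Bool) → Matrix (Fin d) (Fin d) ℂ} (hsum : ∑ a, M a = 1)
    (ψ : EuclideanSpace ℂ (Fin d)) : ∑ a, outcomeProb M ψ a = ‖ψ‖ ^ 2 := by
  have hψ : ∑ a, toEuclideanLin (M a) ψ = ψ := by
    rw [← LinearMap.sum_apply, ← map_sum, hsum, toLpLin_one, LinearMap.id_apply]
  simp_rw [outcomeProb, ← Complex.re_sum, ← inner_sum, hψ]
  exact inner_self_eq_norm_sq (𝕜 := ℂ) ψ

end Measurement

lemma sum_ite_rpow_lt_le_of_sum_mul_sq_le {ι : Type*} [Fintype ι] {p f : ι → ℝ} {c δ : ℝ}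
    (hp : ∀ a, 0 ≤ p a) (hδ : 0 ≤ δ) (h : ∑ a, p a * f a ^ 2 ≤ c * δ ^ 2) :
    ∑ a, (if δ ^ ((2 : ℝ) / 3) < f a then p a else 0) ≤ c * δ ^ ((2 : ℝ) / 3) := by
  set t := δ ^ ((2 : ℝ) / 3)
  rcases hδ.eq_or_lt with rfl | hδ
  · have hterm : ∀ a, 0 ≤ p a * f a ^ 2 := fun a => mul_nonneg (hp a) (sq_nonneg _)
    have hzero : ∀ a, p a * f a ^ 2 = 0 := fun a =>
      (Finset.sum_eq_zero_iff_of_nonneg fun a _ => hterm a).mp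
        (le_antisymm (by simpa using h) (Finset.sum_nonneg fun a _ => hterm a)) a
        (Finset.mem_univ a)
    have ht : t = 0 := Real.zero_rpow (by norm_num)
    rw [ht, mul_zero]
    refine (Finset.sum_eq_zero fun a _ => ?_).le
    split_ifs with hfa
    · simpa [hfa.ne'] using hzero a
    · rfl
  have ht : 0 < t := Real.rpow_pos_of_pos hδ _
  have hδt : δ ^ 2 = t ^ 3 := by
    rw [← Real.rpow_natCast, ← Real.rpow_natCast, ← Real.rpow_mul hδ.le]
    norm_num
  calc ∑ a, (if t < f a then p a else 0)
      ≤ ∑ a, p a * f a ^ 2 / t ^ 2 := by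
        gcongr with a
        split_ifs with hfa
        · rw [le_div_iff₀ (by positivity)]
          gcongr
          exact hp a
        · have := hp a; positivity
    _ ≤ c * t := by
        rw [← Finset.sum_div, div_le_iff₀ (by positivity)]
        linarith [hδt ▸ h]

lemma one_sub_mul_rpow_le_sum_ite_le {ι : Type*} [Fintype ι] {p f : ι → ℝ} {c δ : ℝ}
    (hp : ∀ a, 0 ≤ p a) (hp1 : ∑ a, p a = 1) (hδ : 0 ≤ δ)
    (h : ∑ a, p a * f a ^ 2 ≤ c * δ ^ 2) :
    1 - c * δ ^ ((2 : ℝ) / 3) ≤ ∑ a, (if f a ≤ δ ^ ((2 : ℝ) / 3) then p a else 0) := by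
  have hsplit : ∑ a, (if f a ≤ δ ^ ((2 : ℝ) / 3) then p a else 0) +
      ∑ a, (if δ ^ ((2 : ℝ) / 3) < f a then p a else 0) = 1 := by
    rw [← Finset.sum_add_distrib, ← hp1]
    refine Finset.sum_congr rfl fun a _ => ?_
    by_cases hfa : f a ≤ δ ^ ((2 : ℝ) / 3) <;> simp [hfa]
  linarith [sum_ite_rpow_lt_le_of_sum_mul_sq_le hp hδ h]

lemma outcomeProb_mul_postMeasTraceDist_sq_le {n d d' : ℕ} {V : Matrix (Fin d') (Fin d) ℂ}
    (hV : Vᴴ * V = 1) {M : (Fin n → Bool) → Matrix (Fin d) (Fin d) ℂ}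
    {M' : (Fin n → Bool) → Matrix (Fin d') (Fin d') ℂ} {a : Fin n → Bool}
    (hMherm : (M a).IsHermitian) (hMproj : M a * M a = M a)
    (hM'herm : (M' a).IsHermitian) (hM'proj : M' a * M' a = M' a)
    (ψ : EuclideanSpace ℂ (Fin d)) {ψ' : EuclideanSpace ℂ (Fin d')}
    (hnz : toEuclideanLin (M' a) ψ' ≠ 0) :
    outcomeProb M ψ a * postMeasTraceDist V M ψ M' ψ' a ^ 2 ≤
      4 * ‖toEuclideanLin (V * M a) ψ - toEuclideanLin (M' a) ψ'‖ ^ 2 := by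
  have hp : outcomeProb M ψ a = ‖toEuclideanLin (V * M a) ψ‖ ^ 2 := by
    rw [outcomeProb_eq_norm_sq hMherm hMproj, toLpLin_mul_same, LinearMap.comp_apply,
      norm_toEuclideanLin_of_conjTranspose_mul_self hV]
  set u := toEuclideanLin (V * M a) ψ with hu_def
  set v := toEuclideanLin (M' a) ψ' with hv_def
  by_cases hpos : 0 < outcomeProb M ψ a
  swap
  · rw [postMeasTraceDist, if_neg hpos, zero_pow two_ne_zero, mul_zero]
    positivity
  have hu : u ≠ 0 := by
    rintro hu
    simp [hp, hu] at hpos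
  have hD : postMeasTraceDist V M ψ M' ψ' a ≤ 2 * ‖u - v‖ / ‖u‖ := by
    rw [postMeasTraceDist, if_pos hpos, hp, outcomeProb_eq_norm_sq hM'herm hM'proj, ← hu_def,
      ← hv_def]
    have hT := traceNorm_smul_outer_sub_smul_outer_le hu hnz
    rw [mul_div_assoc] at hT ⊢
    linarith
  have hD0 : 0 ≤ postMeasTraceDist V M ψ M' ψ' a := by
    rw [postMeasTraceDist, if_pos hpos]
    exact mul_nonneg (by norm_num) (traceNorm_nonneg _)
  calc outcomeProb M ψ a * postMeasTraceDist V M ψ M' ψ' a ^ 2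
      ≤ ‖u‖ ^ 2 * (2 * ‖u - v‖ / ‖u‖) ^ 2 := by rw [hp]; gcongr
    _ = 4 * ‖u - v‖ ^ 2 := by
        field_simp [norm_ne_zero_iff.mpr hu]
        ring

theorem robust_prob_general {n d d' : ℕ}
    (V : Matrix (Fin d') (Fin d) ℂ) (hV : V.conjTranspose * V = 1)
    (M : (Fin n → Bool) → Matrix (Fin d) (Fin d) ℂ)
    (hMherm : ∀ a, (M a).IsHermitian) (hMproj : ∀ a, M a * M a = M a)
    (hMsum : ∑ a, M a = 1)
    (ψ : EuclideanSpace ℂ (Fin d)) (hψ : ‖ψ‖ = 1)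
    (M' : (Fin n → Bool) → Matrix (Fin d') (Fin d') ℂ)
    (hM'herm : ∀ a, (M' a).IsHermitian) (hM'proj : ∀ a, M' a * M' a = M' a)
    (ψ' : EuclideanSpace ℂ (Fin d'))
    (hnz : ∀ a, Matrix.toEuclideanLin (M' a) ψ' ≠ 0)
    (δ : ℝ)
    (h : ∀ s : Fin n → Bool,
      ‖Matrix.toEuclideanLin (V * obsOf M s) ψ - Matrix.toEuclideanLin (obsOf M' s) ψ'‖ ≤ δ) :
    1 - 4 * δ ^ ((2 : ℝ) / 3) ≤
      ∑ a : Fin n → Bool,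
        if postMeasTraceDist V M ψ M' ψ' a ≤ δ ^ ((2 : ℝ) / 3) then outcomeProb M ψ a
        else 0 := by
  set w := fun a => toEuclideanLin (V * M a) ψ - toEuclideanLin (M' a) ψ'
  have hw : ∑ a, ‖w a‖ ^ 2 ≤ δ ^ 2 := by
    refine sum_norm_sq_le_of_forall_norm_sum_neg_one_pow_dotCount_smul_le w fun s => ?_
    simpa only [w, smul_sub, Finset.sum_sub_distrib, toEuclideanLin_mul_obsOf_apply,
      toEuclideanLin_obsOf_apply] using h s
  refine one_sub_mul_rpow_le_sum_ite_le
    (fun a => (outcomeProb_eq_norm_sq (hMherm a) (hMproj a) ψ).symm ▸ sq_nonneg _)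
    (by rw [sum_outcomeProb hMsum, hψ, one_pow])
    ((norm_nonneg _).trans (h fun _ => false)) ?_
  calc ∑ a, outcomeProb M ψ a * postMeasTraceDist V M ψ M' ψ' a ^ 2
      ≤ ∑ a, 4 * ‖w a‖ ^ 2 := Finset.sum_le_sum fun a _ =>
        outcomeProb_mul_postMeasTraceDist_sq_le hV (hMherm a) (hMproj a) (hM'herm a)
          (hM'proj a) ψ (hnz a)
    _ ≤ 4 * δ ^ 2 := by rw [← Finset.mul_sum]; gcongr

/-- from `‖V M^s ψ − M'^s ψ'‖ ≤ δ` for all `s`, the trace distance between the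
normalized post-measurement states is at most `δ^{2/3}` with probability at least
`1 − 4δ^{2/3}` over outcomes `a ∼ p`. -/
theorem robust_prob {n d d' : ℕ}
    (V : Matrix (Fin d') (Fin d) ℂ) (hV : V.conjTranspose * V = 1)
    (M : (Fin n → Bool) → Matrix (Fin d) (Fin d) ℂ)
    (hMherm : ∀ a, (M a).IsHermitian) (hMproj : ∀ a, M a * M a = M a)
    (hMsum : ∑ a, M a = 1)
    (ψ : EuclideanSpace ℂ (Fin d)) (hψ : ‖ψ‖ = 1)
    (M' : (Fin n → Bool) → Matrix (Fin d') (Fin d') ℂ)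
    (hM'herm : ∀ a, (M' a).IsHermitian) (hM'proj : ∀ a, M' a * M' a = M' a)
    (hM'sum : ∑ a, M' a = 1)
    (ψ' : EuclideanSpace ℂ (Fin d')) (hψ' : ‖ψ'‖ = 1)
    (hnz : ∀ a, Matrix.toEuclideanLin (M' a) ψ' ≠ 0)
    (δ : ℝ)
    (h : ∀ s : Fin n → Bool,
      ‖Matrix.toEuclideanLin (V * obsOf M s) ψ - Matrix.toEuclideanLin (obsOf M' s) ψ'‖ ≤ δ) :
    1 - 4 * δ ^ ((2 : ℝ) / 3) ≤
      ∑ a : Fin n → Bool,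
        if postMeasTraceDist V M ψ M' ψ' a ≤ δ ^ ((2 : ℝ) / 3) then outcomeProb M ψ a
        else 0 :=
  robust_prob_general V hV M hMherm hMproj hMsum ψ hψ M' hM'herm hM'proj ψ' hnz δ h
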